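/- arXiv:1311.5878 — 2 statements merged into one kernel-verified Lean document; each statement's English description precedes it below -/
import Mathlib

section
/- If x and x' are preimages of the same point y under a one-block factor code from a one-step shift of finite type, and x_{a_i} = x'_{a_i} for a strictly increasing sequence (a_i) of integers, then x ~ x' (they lie in the same transition class). -/
open Set

universe u v uc

variable {A : Type u} {B : Type v}

/-- The shift by `n` on points of the full shift `ℤ → A`. -/
def shiftMap (n : ℤ) (x : ℤ → A) : ℤ → A := fun i => x (i + n)

/-- A subshift: a closed, shift-invariant subset of the full shift. -/
def IsSubshift [TopologicalSpace A] (X : Set (ℤ → A)) : Prop :=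
  IsClosed X ∧ ∀ n : ℤ, ∀ x ∈ X, shiftMap n x ∈ X

/-- The block `u` (of length `p`) occurs in `X`. -/
def OccursIn {p : ℕ} (u : Fin p → A) (X : Set (ℤ → A)) : Prop :=
  ∃ x ∈ X, ∃ i : ℤ, ∀ j : Fin p, x (i + (j.1 : ℤ)) = u j

/-- A shift of finite type: a subshift determined by a set of allowed `k`-blocks. -/
def IsSFT [TopologicalSpace A] (X : Set (ℤ → A)) : Prop :=
  IsSubshift X ∧ ∃ (k : ℕ) (P : (Fin k → A) → Prop),
    X = {x | ∀ i : ℤ, P fun j => x (i + (j.1 : ℤ))}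

/-- A one-step shift of finite type: determined by allowed 2-blocks. -/
def IsOneStep [TopologicalSpace A] (X : Set (ℤ → A)) : Prop :=
  IsSubshift X ∧ ∃ T : A → A → Prop, X = {x | ∀ i : ℤ, T (x i) (x (i + 1))}

/-- Irreducibility: any two blocks of `X` can be seen in a single point of `X`,
the second occurring after the first. -/
def IrreducibleSubshift [TopologicalSpace A] (X : Set (ℤ → A)) : Prop :=
  ∀ (p q : ℕ) (u : Fin p → A) (w : Fin q → A),
    OccursIn u X → OccursIn w X →
      ∃ x ∈ X, ∃ i k : ℤ, i + (p : ℤ) ≤ k ∧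
        (∀ j : Fin p, x (i + (j.1 : ℤ)) = u j) ∧ ∀ j : Fin q, x (k + (j.1 : ℤ)) = w j

/-- A sliding block code: given by a local rule on a finite window. -/
def IsSlidingBlockCode (π : (ℤ → A) → ℤ → B) : Prop :=
  ∃ (r : ℕ) (Φ : (Fin (2 * r + 1) → A) → B),
    ∀ x i, π x i = Φ fun j => x (i - (r : ℤ) + (j.1 : ℤ))

/-- A one-block code. -/
def IsOneBlock (π : (ℤ → A) → ℤ → B) : Prop :=
  ∃ Φ : A → B, ∀ x i, π x i = Φ (x i)

/-- `Φ` is a one-block local rule for `π`. -/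
def OneBlockRule (π : (ℤ → A) → ℤ → B) (Φ : A → B) : Prop :=
  ∀ x i, π x i = Φ (x i)

/-- A factor code from `X` onto `Y`. -/
def IsFactorCode (X : Set (ℤ → A)) (Y : Set (ℤ → B)) (π : (ℤ → A) → ℤ → B) : Prop :=
  IsSlidingBlockCode π ∧ (∀ x ∈ X, π x ∈ Y) ∧ ∀ y ∈ Y, ∃ x ∈ X, π x = y

/-- A factor triple: a factor code from an SFT `X` onto the subshift `Y`. -/
def FactorTriple [TopologicalSpace A] [TopologicalSpace B]
    (X : Set (ℤ → A)) (Y : Set (ℤ → B)) (π : (ℤ → A) → ℤ → B) : Prop :=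
  IsSFT X ∧ IsSubshift Y ∧ IsFactorCode X Y π

/-- Transition `x → x'`: for each `n` there is `z` in the fiber agreeing with `x`
on `(-∞, n]` and with `x'` on `[i, ∞)` for some `i ≥ n`. -/
def TransitionTo (X : Set (ℤ → A)) (π : (ℤ → A) → ℤ → B) (x x' : ℤ → A) : Prop :=
  ∀ n : ℤ, ∃ z ∈ X, π z = π x ∧ (∀ m ≤ n, z m = x m) ∧
    ∃ i : ℤ, n ≤ i ∧ ∀ m : ℤ, i ≤ m → z m = x' m

/-- `x ~ x'`: transitions in both directions. -/
def TransEquiv (X : Set (ℤ → A)) (π : (ℤ → A) → ℤ → B) (x x' : ℤ → A) : Prop :=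
  TransitionTo X π x x' ∧ TransitionTo X π x' x

/-- The transition class of `x` (within the fiber of `π x`). -/
def transClass (X : Set (ℤ → A)) (π : (ℤ → A) → ℤ → B) (x : ℤ → A) : Set (ℤ → A) :=
  {x' | x' ∈ X ∧ π x' = π x ∧ TransEquiv X π x x'}

/-- The set of transition classes over `y`. -/
def transClassesOver (X : Set (ℤ → A)) (π : (ℤ → A) → ℤ → B) (y : ℤ → B) :
    Set (Set (ℤ → A)) :=
  {C | ∃ x, x ∈ X ∧ π x = y ∧ C = transClass X π x}

/-- Right transitive point: its forward orbit is dense in `X`. -/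
def RightTransitive (X : Set (ℤ → A)) (x : ℤ → A) : Prop :=
  x ∈ X ∧ ∀ z ∈ X, ∀ N : ℕ, ∃ n : ℤ, 0 ≤ n ∧ ∀ m : ℤ, |m| ≤ (N : ℤ) → x (m + n) = z m

/-- Left transitive point: its backward orbit is dense in `X`. -/
def LeftTransitive (X : Set (ℤ → A)) (x : ℤ → A) : Prop :=
  x ∈ X ∧ ∀ z ∈ X, ∀ N : ℕ, ∃ n : ℤ, n ≤ 0 ∧ ∀ m : ℤ, |m| ≤ (N : ℤ) → x (m + n) = z m

/-- Doubly transitive point. -/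
def DoublyTransitive (X : Set (ℤ → A)) (x : ℤ → A) : Prop :=
  RightTransitive X x ∧ LeftTransitive X x

def MutuallySeparated (x x' : ℤ → A) : Prop := ∀ i : ℤ, x i ≠ x' i

def RightAsymptotic (x x' : ℤ → A) : Prop := ∃ N : ℤ, ∀ m : ℤ, N ≤ m → x m = x' m

def LeftAsymptotic (x x' : ℤ → A) : Prop := ∃ N : ℤ, ∀ m : ℤ, m ≤ N → x m = x' m

/-- The class degree: the minimal number of transition classes over points of `Y`. -/
noncomputable def classDegree (X : Set (ℤ → A)) (Y : Set (ℤ → B))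
    (π : (ℤ → A) → ℤ → B) : ℕ :=
  sInf {d | ∃ y ∈ Y, Nat.card (transClassesOver X π y) = d}

/-- The preimage blocks of a `Y`-block `w` under the one-block rule `Φ`. -/
def blockPre (X : Set (ℤ → A)) (Φ : A → B) {p : ℕ} (w : Fin p → B) : Set (Fin p → A) :=
  {u | OccursIn u X ∧ ∀ j, Φ (u j) = w j}

/-- `u ∈ π⁻¹(w)` is routable through `a` at time `n`. -/
def Routable (X : Set (ℤ → A)) (Φ : A → B) {p : ℕ} (w : Fin (p + 1) → B)
    (u : Fin (p + 1) → A) (n : Fin (p + 1)) (a : A) : Prop :=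
  ∃ u' ∈ blockPre X Φ w, u' 0 = u 0 ∧ u' (Fin.last p) = u (Fin.last p) ∧ u' n = a

/-- `(w, n, M)` is a transition block. -/
def IsTransBlock (X : Set (ℤ → A)) (Y : Set (ℤ → B)) (Φ : A → B) {p : ℕ}
    (w : Fin (p + 1) → B) (n : Fin (p + 1)) (M : Set A) : Prop :=
  OccursIn w Y ∧ 0 < n.1 ∧ n.1 < p ∧ (∀ a ∈ M, Φ a = w n) ∧
    ∀ u ∈ blockPre X Φ w, ∃ a ∈ M, Routable X Φ w u n a

/-- `c*_π`: the minimal depth of a transition block. -/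
noncomputable def minDepth (X : Set (ℤ → A)) (Y : Set (ℤ → B)) (Φ : A → B) : ℕ :=
  sInf {d | ∃ (p : ℕ) (w : Fin (p + 1) → B) (n : Fin (p + 1)) (M : Set A),
    IsTransBlock X Y Φ w n M ∧ Nat.card M = d}

/-- A minimal transition block. -/
def IsMinTransBlock (X : Set (ℤ → A)) (Y : Set (ℤ → B)) (Φ : A → B) {p : ℕ}
    (w : Fin (p + 1) → B) (n : Fin (p + 1)) (M : Set A) : Prop :=
  IsTransBlock X Y Φ w n M ∧ Nat.card M = minDepth X Y Φ

/-- `d(w)`: the minimal number of symbols seen at a single coordinate among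
the preimages of `w`. -/
noncomputable def dval (X : Set (ℤ → A)) (Φ : A → B) {p : ℕ} (w : Fin p → B) : ℕ :=
  sInf {m | ∃ k : Fin p, Nat.card {a : A | ∃ u ∈ blockPre X Φ w, u k = a} = m}

/-- A magic block: a block of `Y` minimizing `d(·)`. -/
def IsMagicBlock (X : Set (ℤ → A)) (Y : Set (ℤ → B)) (Φ : A → B) {p : ℕ}
    (w : Fin (p + 1) → B) : Prop :=
  OccursIn w Y ∧
    dval X Φ w = sInf {m | ∃ (q : ℕ) (v : Fin (q + 1) → B), OccursIn v Y ∧ dval X Φ v = m}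

/-- An `(X̄, v̄)`-diamond: blocks `u, v` of `X` with the same image, same
endpoints, `u` occurring in `X̄` and `v̄` a subblock of `v`. -/
def IsDiamond (X Xbar : Set (ℤ → A)) (Φ : A → B) {q p : ℕ} (vbar : Fin q → A)
    (u v : Fin (p + 1) → A) : Prop :=
  OccursIn u Xbar ∧ OccursIn v X ∧ (∀ j, Φ (u j) = Φ (v j)) ∧
    (∃ (s : ℕ) (_ : s + q ≤ p + 1), ∀ j : Fin q,
      v ⟨s + j.1, by have := j.2; omega⟩ = vbar j) ∧
    u 0 = v 0 ∧ u (Fin.last p) = v (Fin.last p)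

/-- Reversed transition `x →_r x'`. -/
def RevTransitionTo (X : Set (ℤ → A)) (π : (ℤ → A) → ℤ → B) (x x' : ℤ → A) : Prop :=
  ∀ n : ℤ, ∃ z ∈ X, π z = π x ∧ (∀ m : ℤ, n ≤ m → z m = x' m) ∧
    ∃ i : ℤ, i ≤ n ∧ ∀ m ≤ i, z m = x m

def RevTransEquiv (X : Set (ℤ → A)) (π : (ℤ → A) → ℤ → B) (x x' : ℤ → A) : Prop :=
  RevTransitionTo X π x x' ∧ RevTransitionTo X π x' x

/-- The reversed transition class of `x`. -/
def revClass (X : Set (ℤ → A)) (π : (ℤ → A) → ℤ → B) (x : ℤ → A) : Set (ℤ → A) :=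
  {x' | x' ∈ X ∧ π x' = π x ∧ RevTransEquiv X π x x'}

open scoped Classical in
/-- The standard metric on the full shift. -/
noncomputable def shiftDist (x x' : ℤ → A) : ℝ :=
  if x = x' then 0
  else
    let k : ℕ := sInf {k : ℕ | x (k : ℤ) ≠ x' (k : ℤ) ∨ x (-(k : ℤ)) ≠ x' (-(k : ℤ))}
    (2 : ℝ) ^ (-(k : ℤ))

theorem transEquiv_of_agree_on_strictMono_seq [Fintype A] [TopologicalSpace A] [DiscreteTopology A]
    [Fintype B] [TopologicalSpace B] [DiscreteTopology B]
    (X : Set (ℤ → A)) (Y : Set (ℤ → B)) (π : (ℤ → A) → ℤ → B)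
    (hT : FactorTriple X Y π) (hX1 : IsOneStep X) (hπ1 : IsOneBlock π)
    (hYirr : IrreducibleSubshift Y)
    (y : ℤ → B) (hy : y ∈ Y) (x x' : ℤ → A)
    (hx : x ∈ X) (hx' : x' ∈ X) (hpx : π x = y) (hpx' : π x' = y)
    (a : ℕ → ℤ) (ha : StrictMono a) (hagree : ∀ i : ℕ, x (a i) = x' (a i)) :
    TransEquiv X π x x' := by
  obtain ⟨Φ, hΦ⟩ := hπ1
  obtain ⟨_, T, hTX⟩ := hX1
  have key : ∀ (w w' : ℤ → A), w ∈ X → w' ∈ X → π w = y → π w' = y →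
      (∀ i, w (a i) = w' (a i)) → TransitionTo X π w w' := by
    intro w w' hw hw' hpw hpw' hag n
    have hmono : ∀ i : ℕ, a 0 + i ≤ a i := by
      intro i
      induction i with
      | zero => simp
      | succ k ih =>
        have h2 : a k < a (k + 1) := ha (by omega)
        push_cast
        omega
    obtain ⟨i, hi⟩ : ∃ i : ℕ, n ≤ a i :=
      ⟨(n - a 0).toNat, by have := hmono (n - a 0).toNat; omega⟩
    refine ⟨fun m => if m ≤ a i then w m else w' m, ?_, ?_, ?_, a i, hi, ?_⟩
    · rw [hTX] at hw hw' ⊢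
      intro m
      by_cases h1 : m + 1 ≤ a i
      · simpa only [if_pos (by omega : m ≤ a i), if_pos h1] using hw m
      · by_cases h2 : m ≤ a i
        · have hm : m = a i := by omega
          subst hm
          simp only [hag i]
          split_ifs <;> first | omega | exact hw' (a i)
        · simpa only [if_neg h2, if_neg h1] using hw' m
    · funext m
      rw [hΦ, hΦ]
      by_cases h : m ≤ a i
      · simp [h]
      · simp only [if_neg h]
        have e1 : Φ (w' m) = y m := by rw [← hΦ, hpw']
        have e2 : Φ (w m) = y m := by rw [← hΦ, hpw]
        rw [e1, e2]
    · intro m hm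
      simp [show m ≤ a i by omega]
    · intro m hm
      by_cases h : m ≤ a i
      · have hme : m = a i := le_antisymm h hm
        simp [hme, hag i]
      · simp [h]
  exact ⟨key x x' hx hx' hpx hpx' hagree,
    key x' x hx' hx hpx' hpx fun i => (hagree i).symm⟩
end

section
/- Let (X, Y, π) be an irreducible factor triple with X one-step and π one-block, and let (w, n, M) be a minimal transition block of π. Then every block in π⁻¹(w) is routable through exactly one symbol of M at time n. -/
open Set

universe u v uc

variable {A : Type u} {B : Type v}

/-! ### Auxiliary material for the proof -/

section Aux

variable {A : Type u} {B : Type v}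

def XT (T : A → A → Prop) : Set (ℤ → A) := {x | ∀ i : ℤ, T (x i) (x (i + 1))}

lemma shiftMap_memXT {T : A → A → Prop} {x : ℤ → A} (hx : x ∈ XT T) (s : ℤ) :
    shiftMap s x ∈ XT T := by
  intro i
  have h := hx (i + s)
  have e : i + s + 1 = i + 1 + s := by ring
  rw [e] at h
  exact h

def splice (x y : ℤ → A) (J : ℤ) : ℤ → A := fun t => if t ≤ J then x t else y t

lemma splice_left {x y : ℤ → A} {J t : ℤ} (h : t ≤ J) : splice x y J t = x t := if_pos h

lemma splice_right {x y : ℤ → A} {J t : ℤ} (hJ : x J = y J) (h : J ≤ t) :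
    splice x y J t = y t := by
  by_cases h' : t ≤ J
  · have ht : t = J := le_antisymm h' h
    subst ht
    simpa [splice] using hJ
  · simp [splice, h']

lemma splice_memXT {T : A → A → Prop} {x y : ℤ → A} {J : ℤ}
    (hx : x ∈ XT T) (hy : y ∈ XT T) (hJ : x J = y J) : splice x y J ∈ XT T := by
  intro i
  by_cases h1 : i + 1 ≤ J
  · rw [splice_left (by omega), splice_left h1]; exact hx i
  · by_cases h2 : i ≤ J
    · have hiJ : i = J := by omega
      subst hiJ
      rw [splice_left le_rfl, splice_right hJ (by omega), hJ]
      exact hy i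
    · rw [splice_right hJ (by omega), splice_right hJ (by omega)]
      exact hy i

/-- The path relation over a `lab`-labelled window of length `m * N` starting at `nI`. -/
def PRel (T : A → A → Prop) (Φ : A → B) (lab : ℤ → B) (nI N : ℤ) (m : ℕ) (c d : A) : Prop :=
  ∃ y ∈ XT T, y nI = c ∧ y (nI + (m : ℤ) * N) = d ∧
    ∀ t : ℤ, nI ≤ t → t ≤ nI + (m : ℤ) * N → Φ (y t) = lab t

lemma lab_per {lab : ℤ → B} {N : ℤ} (hlab : ∀ t, lab (t + N) = lab t) :
    ∀ (q : ℕ) (t : ℤ), lab (t + (q : ℤ) * N) = lab t := by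
  intro q
  induction q with
  | zero => intro t; simp
  | succ q ih =>
      intro t
      have e : t + ((q + 1 : ℕ) : ℤ) * N = (t + (q : ℤ) * N) + N := by push_cast; ring
      rw [e, hlab, ih]

lemma PRel_comp {T : A → A → Prop} {Φ : A → B} {lab : ℤ → B} {nI N : ℤ}
    (hN : 0 ≤ N) (hlab : ∀ t, lab (t + N) = lab t) {m₁ m₂ : ℕ} {c e d : A}
    (h1 : PRel T Φ lab nI N m₁ c e) (h2 : PRel T Φ lab nI N m₂ e d) :
    PRel T Φ lab nI N (m₁ + m₂) c d := by
  obtain ⟨y₁, hy₁, hc, he₁, hl₁⟩ := h1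
  obtain ⟨y₂, hy₂, he₂, hd, hl₂⟩ := h2
  have hm₁N : 0 ≤ (m₁ : ℤ) * N := by positivity
  have hm₂N : 0 ≤ (m₂ : ℤ) * N := by positivity
  set J : ℤ := nI + (m₁ : ℤ) * N with hJdef
  set y₂' : ℤ → A := shiftMap (-((m₁ : ℤ) * N)) y₂ with hy₂'def
  have hy₂' : y₂' ∈ XT T := shiftMap_memXT hy₂ _
  have hy₂'eval : ∀ t : ℤ, y₂' t = y₂ (t - (m₁ : ℤ) * N) := by
    intro t
    show y₂ (t + -((m₁ : ℤ) * N)) = _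
    norm_num [sub_eq_add_neg]
  have hjunc : y₁ J = y₂' J := by
    rw [hy₂'eval]
    have e : J - (m₁ : ℤ) * N = nI := by omega
    rw [e, he₁, he₂]
  refine ⟨splice y₁ y₂' J, splice_memXT hy₁ hy₂' hjunc, ?_, ?_, ?_⟩
  · rw [splice_left (by omega)]; exact hc
  · have hge : J ≤ nI + ((m₁ + m₂ : ℕ) : ℤ) * N := by push_cast; nlinarith
    rw [splice_right hjunc hge, hy₂'eval]
    have e : nI + ((m₁ + m₂ : ℕ) : ℤ) * N - (m₁ : ℤ) * N = nI + (m₂ : ℤ) * N := by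
      push_cast; ring
    rw [e, hd]
  · intro t ht1 ht2
    have hcast : ((m₁ + m₂ : ℕ) : ℤ) * N = (m₁ : ℤ) * N + (m₂ : ℤ) * N := by push_cast; ring
    by_cases h : t ≤ J
    · rw [splice_left h]; exact hl₁ t ht1 (by omega)
    · rw [splice_right hjunc (by omega), hy₂'eval]
      have hw1 : nI ≤ t - (m₁ : ℤ) * N := by omega
      have hw2 : t - (m₁ : ℤ) * N ≤ nI + (m₂ : ℤ) * N := by omega
      rw [hl₂ _ hw1 hw2]
      have hh := lab_per hlab m₁ (t - (m₁ : ℤ) * N)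
      rw [sub_add_cancel] at hh
      exact hh.symm

lemma PRel_split {T : A → A → Prop} {Φ : A → B} {lab : ℤ → B} {nI N : ℤ}
    (hN : 0 ≤ N) (hlab : ∀ t, lab (t + N) = lab t) {m₁ m₂ : ℕ} {c d : A}
    (h : PRel T Φ lab nI N (m₁ + m₂) c d) :
    ∃ e, PRel T Φ lab nI N m₁ c e ∧ PRel T Φ lab nI N m₂ e d := by
  obtain ⟨y, hy, hc, hd, hl⟩ := h
  have hm₁N : 0 ≤ (m₁ : ℤ) * N := by positivity
  have hm₂N : 0 ≤ (m₂ : ℤ) * N := by positivity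
  have hcast : ((m₁ + m₂ : ℕ) : ℤ) * N = (m₁ : ℤ) * N + (m₂ : ℤ) * N := by push_cast; ring
  refine ⟨y (nI + (m₁ : ℤ) * N), ⟨y, hy, hc, rfl, fun t h1 h2 => hl t h1 (by omega)⟩, ?_⟩
  set y' : ℤ → A := shiftMap ((m₁ : ℤ) * N) y with hy'def
  have hy'eval : ∀ t : ℤ, y' t = y (t + (m₁ : ℤ) * N) := fun t => rfl
  refine ⟨y', shiftMap_memXT hy _, rfl, ?_, ?_⟩
  · rw [hy'eval]
    have e : nI + (m₂ : ℤ) * N + (m₁ : ℤ) * N = nI + ((m₁ + m₂ : ℕ) : ℤ) * N := by omega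
    rw [e]; exact hd
  · intro t h1 h2
    rw [hy'eval, hl _ (by omega) (by omega)]
    exact lab_per hlab m₁ t

/-- Existence of an "idempotent power" index for iterates computed by a step map
on a finite type. -/
lemma exists_idem_index {γ : Type w} [Finite γ] (f : ℕ → γ) (g : γ → γ)
    (hfg : ∀ m, f (m + 1) = g (f m)) :
    ∃ k, 1 ≤ k ∧ f (2 * k) = f k := by
  obtain ⟨i, j, hne, hfij⟩ := Finite.exists_ne_map_eq_of_infinite f
  wlog hij : i < j generalizing i j
  · exact this j i hne.symm hfij.symm (by omega)
  have hshift : ∀ s, f (i + s) = f (j + s) := by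
    intro s
    induction s with
    | zero => simpa using hfij
    | succ s ih =>
        have e1 : i + (s + 1) = (i + s) + 1 := by omega
        have e2 : j + (s + 1) = (j + s) + 1 := by omega
        rw [e1, e2, hfg, hfg, ih]
  have hstab : ∀ m, i ≤ m → f m = f (m + (j - i)) := by
    intro m hm
    have h1 := hshift (m - i)
    have e1 : i + (m - i) = m := by omega
    have e2 : j + (m - i) = m + (j - i) := by omega
    rw [e1, e2] at h1
    exact h1
  set k := (i + 1) * (j - i) with hk
  have hk1 : 1 ≤ k := by
    have h1 : 1 ≤ j - i := by omega
    calc 1 = 1 * 1 := by ring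
    _ ≤ (i + 1) * (j - i) := Nat.mul_le_mul (by omega) h1
  have hki : i + 1 ≤ k := by
    calc i + 1 = (i + 1) * 1 := by ring
    _ ≤ (i + 1) * (j - i) := Nat.mul_le_mul_left _ (by omega)
  have hcycle : ∀ t : ℕ, f k = f (k + t * (j - i)) := by
    intro t
    induction t with
    | zero => simp
    | succ t ih =>
        have h1 := hstab (k + t * (j - i)) (by omega)
        rw [ih, h1]
        congr 1
        ring
  refine ⟨k, hk1, ?_⟩
  have h2 := hcycle (i + 1)
  rw [h2]
  congr 1
  rw [hk]
  ring

end Aux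

section Key

variable {A : Type u} {B : Type v}

/-- Construction of a smaller transition block from a doubly-routed block. -/
lemma construct_tb [Fintype A] [TopologicalSpace A] [DiscreteTopology A]
    [Fintype B] [TopologicalSpace B] [DiscreteTopology B]
    (Y : Set (ℤ → B)) (π : (ℤ → A) → ℤ → B) (Φ : A → B) (T : A → A → Prop)
    (hT : FactorTriple (XT T) Y π) (hXirr : IrreducibleSubshift (XT T))
    (hΦ : OneBlockRule π Φ)
    (p : ℕ) (w : Fin (p + 1) → B) (n : Fin (p + 1)) (M : Set A)
    (hn0 : 0 < n.1) (hnp : n.1 < p) (hΦM : ∀ a ∈ M, Φ a = w n)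
    (htrans : ∀ v ∈ blockPre (XT T) Φ w, ∃ a ∈ M, Routable (XT T) Φ w v n a)
    (u : Fin (p + 1) → A) (hu : u ∈ blockPre (XT T) Φ w)
    (a₁ a₂ : A) (h₁ : a₁ ∈ M) (h₂ : a₂ ∈ M)
    (r₁ : Routable (XT T) Φ w u n a₁) (r₂ : Routable (XT T) Φ w u n a₂)
    (hab : ¬ a₁ = a₂) :
    ∃ (L : ℕ) (W : Fin (L + 1) → B) (j : Fin (L + 1)),
      IsTransBlock (XT T) Y Φ W j (M \ {a₂}) := by
  have hn0I : 0 < (n.1 : ℤ) := by exact_mod_cast hn0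
  have hnpI : (n.1 : ℤ) < (p : ℤ) := by exact_mod_cast hnp
  -- the doubled occurrence of u, via irreducibility
  obtain ⟨x0, hx0X, i0, k0, hik, hocc1, hocc2⟩ := hXirr (p + 1) (p + 1) u u hu.1 hu.1
  set N : ℤ := k0 - i0 with hNdef
  have hNp : (p : ℤ) + 1 ≤ N := by
    have : i0 + ((p + 1 : ℕ) : ℤ) ≤ k0 := hik
    push_cast at this
    omega
  have hNpos : 0 < N := by
    have hp0 : (0:ℤ) ≤ (p:ℤ) := by positivity
    omega
  -- the N-periodic point z
  set x' : ℤ → A := shiftMap i0 x0 with hx'def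
  have hx'X : x' ∈ XT T := shiftMap_memXT hx0X i0
  have hx'eval : ∀ t : ℤ, x' t = x0 (t + i0) := fun t => rfl
  have hx'u : ∀ j : Fin (p + 1), x' ((j.1 : ℤ)) = u j := by
    intro j
    rw [hx'eval, add_comm]
    exact hocc1 j
  have hx'u2 : ∀ j : Fin (p + 1), x' (N + (j.1 : ℤ)) = u j := by
    intro j
    rw [hx'eval]
    have e : N + (j.1 : ℤ) + i0 = k0 + (j.1 : ℤ) := by omega
    rw [e]
    exact hocc2 j
  have hx'N : x' N = x' 0 := by
    have h1 : x' (N + ((0 : Fin (p+1)).1 : ℤ)) = u 0 := hx'u2 0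
    have h2 : x' (((0 : Fin (p+1)).1 : ℤ)) = u 0 := hx'u 0
    simp only [Fin.val_zero, Nat.cast_zero, add_zero] at h1 h2
    rw [h1, h2]
  set z : ℤ → A := fun t => x' (t % N) with hzdef
  have hzeval : ∀ t : ℤ, z t = x' (t % N) := fun t => rfl
  have hzX : z ∈ XT T := by
    intro t
    have h0r : 0 ≤ t % N := Int.emod_nonneg t (by omega)
    have h1r : t % N < N := Int.emod_lt_of_pos t hNpos
    have he : (t + 1) % N = (t % N + 1) % N := by
      conv_lhs => rw [Int.add_emod]
      have h1N : (1 : ℤ) % N = 1 := Int.emod_eq_of_lt (by norm_num) (by omega)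
      rw [h1N]
    show T (z t) (z (t + 1))
    rw [hzeval, hzeval]
    by_cases hr : t % N + 1 < N
    · have e : (t + 1) % N = t % N + 1 := by
        rw [he, Int.emod_eq_of_lt (by omega) hr]
      rw [e]
      exact hx'X (t % N)
    · have hrN : t % N + 1 = N := by omega
      have e : (t + 1) % N = 0 := by rw [he, hrN, Int.emod_self]
      rw [e, ← hx'N]
      have h9 := hx'X (t % N)
      rw [hrN] at h9
      exact h9
  have hzper : ∀ (t q : ℤ), z (t + q * N) = z t := by
    intro t q
    rw [hzeval, hzeval, Int.add_mul_emod_self_right]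
  have hzu : ∀ j : Fin (p + 1), z ((j.1 : ℤ)) = u j := by
    intro j
    rw [hzeval]
    have hj : (j.1 : ℤ) < N := by
      have := j.2
      have : (j.1 : ℤ) < (p : ℤ) + 1 := by exact_mod_cast this
      omega
    rw [Int.emod_eq_of_lt (by positivity) hj]
    exact hx'u j
  have hzw : ∀ j : Fin (p + 1), Φ (z ((j.1 : ℤ))) = w j := by
    intro j
    rw [hzu j]
    exact hu.2 j
  have hlabper : ∀ t : ℤ, Φ (z (t + N)) = Φ (z t) := by
    intro t
    have h1 := hzper t 1
    rw [one_mul] at h1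
    rw [h1]
  -- the basic one-step relation for the pair {a₁, a₂}
  have hroute : ∀ c : A, (c = a₁ ∨ c = a₂) →
      ∃ uc : Fin (p + 1) → A, uc ∈ blockPre (XT T) Φ w ∧ uc 0 = u 0 ∧
        uc (Fin.last p) = u (Fin.last p) ∧ uc n = c := by
    rintro c (rfl | rfl)
    · obtain ⟨uc, hucbp, h0, hp', hn'⟩ := r₁
      exact ⟨uc, hucbp, h0, hp', hn'⟩
    · obtain ⟨uc, hucbp, h0, hp', hn'⟩ := r₂
      exact ⟨uc, hucbp, h0, hp', hn'⟩
  have hP1 : ∀ c d : A, (c = a₁ ∨ c = a₂) → (d = a₁ ∨ d = a₂) →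
      PRel T Φ (fun s => Φ (z s)) (n.1 : ℤ) N 1 c d := by
    intro c d hc hd
    obtain ⟨uc, ⟨⟨xc, hxcX, ic, hmc⟩, hucl⟩, huc0, hucp, hucn⟩ := hroute c hc
    obtain ⟨ud, ⟨⟨xd, hxdX, idd, hmd⟩, hudl⟩, hud0, hudp, hudn⟩ := hroute d hd
    set yc : ℤ → A := shiftMap ic xc with hycdef
    have hycX : yc ∈ XT T := shiftMap_memXT hxcX ic
    have hyc : ∀ j : Fin (p + 1), yc ((j.1 : ℤ)) = uc j := by
      intro j
      show xc ((j.1 : ℤ) + ic) = uc j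
      rw [add_comm]
      exact hmc j
    set yd : ℤ → A := shiftMap (idd - N) xd with hyddef
    have hydX : yd ∈ XT T := shiftMap_memXT hxdX (idd - N)
    have hyd : ∀ j : Fin (p + 1), yd (N + (j.1 : ℤ)) = ud j := by
      intro j
      show xd (N + (j.1 : ℤ) + (idd - N)) = ud j
      have e : N + (j.1 : ℤ) + (idd - N) = idd + (j.1 : ℤ) := by ring
      rw [e]
      exact hmd j
    -- junction at p
    have hj1 : yc ((p : ℤ)) = z ((p : ℤ)) := by
      have e1 : yc ((p : ℤ)) = uc (Fin.last p) := hyc (Fin.last p)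
      have e2 : z ((p : ℤ)) = u (Fin.last p) := hzu (Fin.last p)
      rw [e1, e2, hucp]
    set s1 : ℤ → A := splice yc z (p : ℤ) with hs1def
    have hs1X : s1 ∈ XT T := splice_memXT hycX hzX hj1
    have hzN : z N = u 0 := by
      have e1 : z N = x' (N % N) := hzeval N
      rw [Int.emod_self] at e1
      have e2 : x' ((0:ℤ)) = u 0 := hx'u 0
      rw [e1]
      exact e2
    have hj2 : s1 N = yd N := by
      have e1 : s1 N = z N := splice_right hj1 (by omega)
      have e2 : yd N = u 0 := by
        have h3 := hyd 0
        simpa using h3.trans hud0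
      rw [e1, e2, hzN]
    set s2 : ℤ → A := splice s1 yd N with hs2def
    have hs2X : s2 ∈ XT T := splice_memXT hs1X hydX hj2
    refine ⟨s2, hs2X, ?_, ?_, ?_⟩
    · -- value c at n
      have e1 : s2 ((n.1 : ℤ)) = s1 ((n.1 : ℤ)) := splice_left (by omega)
      have e2 : s1 ((n.1 : ℤ)) = yc ((n.1 : ℤ)) := splice_left (by omega)
      rw [e1, e2]
      exact (hyc n).trans hucn
    · -- value d at n + N
      have e0 : (n.1 : ℤ) + ((1:ℕ) : ℤ) * N = N + (n.1 : ℤ) := by push_cast; ring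
      rw [e0]
      have e1 : s2 (N + (n.1 : ℤ)) = yd (N + (n.1 : ℤ)) := splice_right hj2 (by omega)
      rw [e1]
      exact (hyd n).trans hudn
    · -- labels
      intro t ht1 ht2
      have hcast : (n.1 : ℤ) + ((1:ℕ) : ℤ) * N = (n.1 : ℤ) + N := by push_cast; ring
      rw [hcast] at ht2
      by_cases ha : t ≤ (p : ℤ)
      · have e1 : s2 t = s1 t := splice_left (by omega)
        have e2 : s1 t = yc t := splice_left ha
        rw [e1, e2]
        have h0 : 0 ≤ t := by omega
        obtain ⟨tn, rfl⟩ := Int.eq_ofNat_of_zero_le h0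
        have htp : tn ≤ p := by exact_mod_cast ha
        calc Φ (yc ((tn : ℤ))) = Φ (uc ⟨tn, by omega⟩) := by rw [hyc ⟨tn, by omega⟩]
        _ = w ⟨tn, by omega⟩ := hucl ⟨tn, by omega⟩
        _ = Φ (z ((tn : ℤ))) := (hzw ⟨tn, by omega⟩).symm
      · by_cases hb : t ≤ N
        · have e1 : s2 t = s1 t := splice_left hb
          have e2 : s1 t = z t := splice_right hj1 (by omega)
          rw [e1, e2]
        · have e1 : s2 t = yd t := splice_right hj2 (by omega)
          rw [e1]
          have h0 : 0 ≤ t - N := by omega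
          obtain ⟨sn, hsn⟩ := Int.eq_ofNat_of_zero_le h0
          have hsp : sn ≤ p := by
            have h5 : ((sn : ℕ) : ℤ) ≤ (n.1 : ℤ) := by omega
            have h6 : (n.1 : ℤ) ≤ (p : ℤ) := by omega
            exact_mod_cast le_trans h5 h6
          have e2 : t = N + (sn : ℤ) := by omega
          rw [e2]
          calc Φ (yd (N + (sn : ℤ))) = Φ (ud ⟨sn, by omega⟩) := by
                rw [hyd ⟨sn, by omega⟩]
          _ = w ⟨sn, by omega⟩ := hudl ⟨sn, by omega⟩
          _ = Φ (z ((sn : ℤ))) := (hzw ⟨sn, by omega⟩).symm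
          _ = Φ (z (N + (sn : ℤ))) := by
                have h7 := hzper ((sn : ℤ)) 1
                rw [one_mul] at h7
                rw [add_comm] at h7
                rw [h7]
  have hPm : ∀ m : ℕ, ∀ c d : A, (c = a₁ ∨ c = a₂) → (d = a₁ ∨ d = a₂) →
      PRel T Φ (fun s => Φ (z s)) (n.1 : ℤ) N (m + 1) c d := by
    intro m
    induction m with
    | zero => exact hP1
    | succ m ih =>
        intro c d hc hd
        exact PRel_comp (by omega) hlabper (ih c d hc hd) (hP1 d d hd hd)
  -- idempotent power
  obtain ⟨k, hk1, hf2k⟩ := exists_idem_index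
    (fun m => {q : A × A | PRel T Φ (fun s => Φ (z s)) (n.1 : ℤ) N m q.1 q.2})
    (fun S => {q : A × A | ∃ e, (q.1, e) ∈ S ∧ PRel T Φ (fun s => Φ (z s)) (n.1 : ℤ) N 1 e q.2})
    (by
      intro m
      ext q
      constructor
      · intro h
        exact PRel_split (by omega) hlabper h
      · rintro ⟨e, h1, h2⟩
        exact PRel_comp (by omega) hlabper h1 h2)
  have hidem : ∀ c d : A, PRel T Φ (fun s => Φ (z s)) (n.1 : ℤ) N (k + k) c d →
      PRel T Φ (fun s => Φ (z s)) (n.1 : ℤ) N k c d := by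
    intro c d h
    have h2 : (c, d) ∈ {q : A × A | PRel T Φ (fun s => Φ (z s)) (n.1 : ℤ) N (2 * k) q.1 q.2} := by
      rw [two_mul]
      exact h
    rw [hf2k] at h2
    exact h2
  have hEcomp : ∀ c e d : A, PRel T Φ (fun s => Φ (z s)) (n.1 : ℤ) N k c e →
      PRel T Φ (fun s => Φ (z s)) (n.1 : ℤ) N k e d →
      PRel T Φ (fun s => Φ (z s)) (n.1 : ℤ) N k c d := by
    intro c e d h1 h2
    exact hidem c d (PRel_comp (by omega) hlabper h1 h2)
  have hpk : ∀ c d : A, (c = a₁ ∨ c = a₂) → (d = a₁ ∨ d = a₂) →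
      PRel T Φ (fun s => Φ (z s)) (n.1 : ℤ) N k c d := by
    intro c d hc hd
    obtain ⟨k', rfl⟩ : ∃ k', k = k' + 1 := ⟨k - 1, by omega⟩
    exact hPm k' c d hc hd
  -- the composite word
  set KN : ℤ := (k : ℤ) * N with hKNdef
  have hKNp : (p : ℤ) + 1 ≤ KN := by
    have h1 : (1 : ℤ) ≤ (k : ℤ) := by exact_mod_cast hk1
    have h2 : (1 : ℤ) * N ≤ (k : ℤ) * N := by
      exact mul_le_mul_of_nonneg_right h1 (by omega)
    rw [one_mul] at h2
    omega
  set Nn : ℕ := N.toNat with hNndef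
  have hNn : ((Nn : ℕ) : ℤ) = N := Int.toNat_of_nonneg (by omega)
  set KNn : ℕ := k * Nn with hKNndef
  have hKNn : ((KNn : ℕ) : ℤ) = KN := by
    rw [hKNndef, hKNdef]
    push_cast [hNn]
    ring
  have hKNnp : p + 1 ≤ KNn := by
    have := hKNp
    rw [← hKNn] at this
    exact_mod_cast this
  set L : ℕ := KNn + KNn + p with hLdef
  have hLI : ((L : ℕ) : ℤ) = KN + KN + (p : ℤ) := by
    rw [hLdef]
    push_cast [hKNn]
    ring
  set jstar : Fin (L + 1) := ⟨KNn + n.1, by omega⟩ with hjstardef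
  have hjstarI : ((jstar.1 : ℕ) : ℤ) = KN + (n.1 : ℤ) := by
    show ((KNn + n.1 : ℕ) : ℤ) = KN + (n.1 : ℤ)
    push_cast [hKNn]
    ring
  -- window label facts
  have hzq : ∀ q : ℤ, (∃ m : ℤ, q = m * N) → ∀ j : Fin (p + 1),
      Φ (z (q + (j.1 : ℤ))) = w j := by
    rintro q ⟨m, rfl⟩ j
    have e : m * N + (j.1 : ℤ) = (j.1 : ℤ) + m * N := by ring
    rw [e, hzper]
    exact hzw j
  have hwin : ∀ (y : ℤ → A) (q : ℤ), 0 ≤ q → q + (p : ℤ) ≤ (L : ℤ) →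
      (∃ m : ℤ, q = m * N) →
      (∀ t : ℤ, 0 ≤ t → t ≤ (L : ℤ) → Φ (y t) = Φ (z t)) →
      ∀ j : Fin (p + 1), Φ (y (q + (j.1 : ℤ))) = w j := by
    intro y q h0 hL hm hg j
    have hj : (j.1 : ℤ) ≤ (p : ℤ) := by
      have := j.2
      have h5 : (j.1 : ℤ) < (p : ℤ) + 1 := by exact_mod_cast this
      omega
    rw [hg (q + (j.1 : ℤ)) (by omega) (by omega)]
    exact hzq q hm j
  have globlab : ∀ (y y' : ℤ → A) (q : ℤ), 0 ≤ q →
      (∀ j : Fin (p + 1), Φ (z (q + (j.1 : ℤ))) = w j) →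
      (∀ t : ℤ, t ≤ q → y' t = y t) → (∀ t : ℤ, q + (p : ℤ) ≤ t → y' t = y t) →
      (∀ j : Fin (p + 1), Φ (y' (q + (j.1 : ℤ))) = w j) →
      (∀ t : ℤ, 0 ≤ t → t ≤ (L : ℤ) → Φ (y t) = Φ (z t)) →
      ∀ t : ℤ, 0 ≤ t → t ≤ (L : ℤ) → Φ (y' t) = Φ (z t) := by
    intro y y' q hq0 hzq' hel her hwl hyl t h0 hL
    by_cases hA : t ≤ q
    · rw [hel t hA]; exact hyl t h0 hL
    · by_cases hB : q + (p : ℤ) ≤ t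
      · rw [her t hB]; exact hyl t h0 hL
      · have h1 : 0 ≤ t - q := by omega
        obtain ⟨jn, hjn⟩ := Int.eq_ofNat_of_zero_le h1
        have hjpI : ((jn : ℕ) : ℤ) ≤ (p : ℤ) := by omega
        have hjp : jn ≤ p := by exact_mod_cast hjpI
        have e : t = q + (jn : ℤ) := by omega
        rw [e]
        calc Φ (y' (q + (jn : ℤ))) = w ⟨jn, by omega⟩ := hwl ⟨jn, by omega⟩
        _ = Φ (z (q + (jn : ℤ))) := (hzq' ⟨jn, by omega⟩).symm
  -- the rerouting lemma
  have RR : ∀ y : ℤ → A, y ∈ XT T → ∀ q : ℤ,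
      (∀ j : Fin (p + 1), Φ (y (q + (j.1 : ℤ))) = w j) →
      ∃ y' : ℤ → A, y' ∈ XT T ∧ (∃ c, c ∈ M ∧ y' (q + (n.1 : ℤ)) = c) ∧
        (∀ t : ℤ, t ≤ q → y' t = y t) ∧ (∀ t : ℤ, q + (p : ℤ) ≤ t → y' t = y t) ∧
        (∀ j : Fin (p + 1), Φ (y' (q + (j.1 : ℤ))) = w j) := by
    intro y hyX q hylab
    have hvbp : (fun j : Fin (p + 1) => y (q + (j.1 : ℤ))) ∈ blockPre (XT T) Φ w :=
      ⟨⟨y, hyX, q, fun j => rfl⟩, hylab⟩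
    obtain ⟨c, hcM, v', hv'bp, h0, hp', hn'⟩ := htrans _ hvbp
    obtain ⟨⟨yw, hywX, iw, hmw⟩, hv'lab⟩ := hv'bp
    set yh : ℤ → A := shiftMap (iw - q) yw with hyhdef
    have hyhX : yh ∈ XT T := shiftMap_memXT hywX (iw - q)
    have hyhv : ∀ j : Fin (p + 1), yh (q + (j.1 : ℤ)) = v' j := by
      intro j
      show yw (q + (j.1 : ℤ) + (iw - q)) = v' j
      have e : q + (j.1 : ℤ) + (iw - q) = iw + (j.1 : ℤ) := by ring
      rw [e]
      exact hmw j
    have hj1 : y q = yh q := by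
      have e1 : yh (q + ((0 : Fin (p+1)).1 : ℤ)) = v' 0 := hyhv 0
      have e2 : v' 0 = y (q + ((0 : Fin (p+1)).1 : ℤ)) := h0
      simp only [Fin.val_zero, Nat.cast_zero, add_zero] at e1 e2
      exact e2.symm.trans e1.symm
    set s1 : ℤ → A := splice y yh q with hs1def
    have hs1X : s1 ∈ XT T := splice_memXT hyX hyhX hj1
    have hj2 : s1 (q + (p : ℤ)) = y (q + (p : ℤ)) := by
      have e1 : s1 (q + (p : ℤ)) = yh (q + (p : ℤ)) := splice_right hj1 (by omega)
      have e2 : yh (q + ((p : ℕ) : ℤ)) = v' (Fin.last p) := hyhv (Fin.last p)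
      have e3 : v' (Fin.last p) = y (q + ((p : ℕ) : ℤ)) := hp'
      rw [e1, e2, e3]
    set y' : ℤ → A := splice s1 y (q + (p : ℤ)) with hy'def
    have hy'X : y' ∈ XT T := splice_memXT hs1X hyX hj2
    have hval : ∀ j : Fin (p + 1), y' (q + (j.1 : ℤ)) = v' j := by
      intro j
      have hj : (j.1 : ℤ) ≤ (p : ℤ) := by
        have := j.2
        have h5 : (j.1 : ℤ) < (p : ℤ) + 1 := by exact_mod_cast this
        omega
      have e1 : y' (q + (j.1 : ℤ)) = s1 (q + (j.1 : ℤ)) := splice_left (by omega)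
      have e2 : s1 (q + (j.1 : ℤ)) = yh (q + (j.1 : ℤ)) := splice_right hj1 (by omega)
      rw [e1, e2]
      exact hyhv j
    refine ⟨y', hy'X, ⟨c, hcM, ?_⟩, ?_, ?_, ?_⟩
    · exact (hval n).trans hn'
    · intro t ht
      have e1 : y' t = s1 t := splice_left (by omega)
      have e2 : s1 t = y t := splice_left ht
      rw [e1, e2]
    · intro t ht
      exact splice_right hj2 ht
    · intro j
      rw [hval j]
      exact hv'lab j
  -- construct the transition block (W, jstar, M \ {a₂}) and derive the contradiction
  have htb : IsTransBlock (XT T) Y Φ (fun j : Fin (L + 1) => Φ (z ((j.1 : ℕ) : ℤ)))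
      jstar (M \ {a₂}) := by
    refine ⟨?_, ?_, ?_, ?_, ?_⟩
    · -- occurs in Y
      refine ⟨π z, hT.2.2.2.1 z hzX, 0, fun j => ?_⟩
      rw [hΦ]
      show Φ (z (0 + ((j.1 : ℕ) : ℤ))) = Φ (z ((j.1 : ℕ) : ℤ))
      rw [zero_add]
    · show 0 < KNn + n.1
      omega
    · show KNn + n.1 < L
      omega
    · intro a' ha'
      show Φ a' = Φ (z ((jstar.1 : ℕ) : ℤ))
      have h1 : z ((jstar.1 : ℕ) : ℤ) = z ((n.1 : ℤ)) := by
        rw [hjstarI]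
        have h2 := hzper ((n.1 : ℤ)) (k : ℤ)
        rw [← hKNdef] at h2
        rw [add_comm KN ((n.1 : ℤ))]
        exact h2
      rw [h1]
      have h3 : Φ (z ((n.1 : ℤ))) = w n := hzw n
      rw [h3]
      exact hΦM a' ha'.1
    · -- the transition property
      intro U hU
      obtain ⟨⟨xU, hxUX, iU, hmU⟩, hUlab⟩ := hU
      set xh : ℤ → A := shiftMap iU xU with hxhdef
      have hxhX : xh ∈ XT T := shiftMap_memXT hxUX iU
      have hxhU : ∀ j : Fin (L + 1), xh ((j.1 : ℕ) : ℤ) = U j := by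
        intro j
        show xU (((j.1 : ℕ) : ℤ) + iU) = U j
        rw [add_comm]
        exact hmU j
      have hxhlab : ∀ t : ℤ, 0 ≤ t → t ≤ (L : ℤ) → Φ (xh t) = Φ (z t) := by
        intro t h0 hL
        obtain ⟨tn, rfl⟩ := Int.eq_ofNat_of_zero_le h0
        have htn : tn ≤ L := by exact_mod_cast hL
        calc Φ (xh ((tn : ℤ))) = Φ (U ⟨tn, by omega⟩) := by
              rw [hxhU ⟨tn, by omega⟩]
        _ = Φ (z ((tn : ℤ))) := hUlab ⟨tn, by omega⟩
      -- first reroute: at the middle copy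
      have hmulKN : ∃ m : ℤ, KN = m * N := ⟨(k : ℤ), hKNdef⟩
      have hmul0 : ∃ m : ℤ, (0 : ℤ) = m * N := ⟨0, by ring⟩
      have hmul2KN : ∃ m : ℤ, KN + KN = m * N := ⟨(k : ℤ) + (k : ℤ), by rw [hKNdef]; ring⟩
      obtain ⟨x₁, hx₁X, ⟨c, hcM, hc1⟩, h1l, h1r, h1w⟩ :=
        RR xh hxhX KN (hwin xh KN (by omega) (by omega) hmulKN hxhlab)
      have hx₁lab : ∀ t : ℤ, 0 ≤ t → t ≤ (L : ℤ) → Φ (x₁ t) = Φ (z t) :=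
        globlab xh x₁ KN (by omega) (hzq KN hmulKN) h1l h1r h1w hxhlab
      by_cases hca : c = a₂
      · -- the hard case: the middle reroute is forced through a₂; go around via a₁
        rw [hca] at hc1
        obtain ⟨x₂, hx₂X, ⟨c₀, hc₀M, hc₀⟩, h2l, h2r, h2w⟩ :=
          RR x₁ hx₁X 0 (hwin x₁ 0 (by omega) (by omega) hmul0 hx₁lab)
        have hx₂lab : ∀ t : ℤ, 0 ≤ t → t ≤ (L : ℤ) → Φ (x₂ t) = Φ (z t) :=
          globlab x₁ x₂ 0 (by omega) (hzq 0 hmul0) h2l h2r h2w hx₁lab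
        obtain ⟨x₃, hx₃X, ⟨c₂, hc₂M, hc₂⟩, h3l, h3r, h3w⟩ :=
          RR x₂ hx₂X (KN + KN) (hwin x₂ (KN + KN) (by omega) (by omega) hmul2KN hx₂lab)
        have hx₃lab : ∀ t : ℤ, 0 ≤ t → t ≤ (L : ℤ) → Φ (x₃ t) = Φ (z t) :=
          globlab x₂ x₃ (KN + KN) (by omega) (hzq (KN + KN) hmul2KN) h3l h3r h3w hx₂lab
        -- values at the three marked positions
        have hx₃n : x₃ ((n.1 : ℤ)) = c₀ := by
          rw [h3l ((n.1 : ℤ)) (by omega)]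
          rw [show ((n.1 : ℤ)) = 0 + ((n.1 : ℤ)) from by ring]
          exact hc₀
        have hx₃k : x₃ (KN + (n.1 : ℤ)) = a₂ := by
          rw [h3l _ (by omega), h2r _ (by omega)]
          exact hc1
        have hx₃2k : x₃ (KN + KN + (n.1 : ℤ)) = c₂ := hc₂
        -- PRel facts through the composite word
        have hRc0b : PRel T Φ (fun s => Φ (z s)) (n.1 : ℤ) N k c₀ a₂ := by
          refine ⟨x₃, hx₃X, hx₃n, ?_, ?_⟩
          · rw [show (n.1 : ℤ) + (k : ℤ) * N = KN + (n.1 : ℤ) from by rw [hKNdef]; ring]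
            exact hx₃k
          · intro t ht1 ht2
            rw [show (n.1 : ℤ) + (k : ℤ) * N = (n.1 : ℤ) + KN from by rw [hKNdef]] at ht2
            exact hx₃lab t (by omega) (by omega)
        have hRbc2 : PRel T Φ (fun s => Φ (z s)) (n.1 : ℤ) N k a₂ c₂ := by
          refine ⟨shiftMap KN x₃, shiftMap_memXT hx₃X KN, ?_, ?_, ?_⟩
          · show x₃ ((n.1 : ℤ) + KN) = a₂
            rw [add_comm]
            exact hx₃k
          · show x₃ ((n.1 : ℤ) + (k : ℤ) * N + KN) = c₂
            rw [show (n.1 : ℤ) + (k : ℤ) * N + KN = KN + KN + (n.1 : ℤ) from by rw [hKNdef]; ring]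
            exact hx₃2k
          · intro t ht1 ht2
            rw [show (n.1 : ℤ) + (k : ℤ) * N = (n.1 : ℤ) + KN from by rw [hKNdef]] at ht2
            show Φ (x₃ (t + KN)) = Φ (z t)
            rw [hx₃lab (t + KN) (by omega) (by omega)]
            rw [show t + KN = t + (k : ℤ) * N from by rw [hKNdef]]
            rw [hzper]
        have hEc0a : PRel T Φ (fun s => Φ (z s)) (n.1 : ℤ) N k c₀ a₁ :=
          hEcomp _ _ _ hRc0b (hpk a₂ a₁ (Or.inr rfl) (Or.inl rfl))
        have hEac2 : PRel T Φ (fun s => Φ (z s)) (n.1 : ℤ) N k a₁ c₂ :=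
          hEcomp _ _ _ (hpk a₁ a₂ (Or.inl rfl) (Or.inr rfl)) hRbc2
        obtain ⟨y₁, hy₁X, hy₁n, hy₁e, hy₁lab⟩ := hEc0a
        obtain ⟨y₂, hy₂X, hy₂n, hy₂e, hy₂lab⟩ := hEac2
        have hy₁e' : y₁ ((n.1 : ℤ) + KN) = a₁ := by
          rw [show (n.1 : ℤ) + KN = (n.1 : ℤ) + (k : ℤ) * N from by rw [hKNdef]]
          exact hy₁e
        have hy₂e' : y₂ ((n.1 : ℤ) + KN) = c₂ := by
          rw [show (n.1 : ℤ) + KN = (n.1 : ℤ) + (k : ℤ) * N from by rw [hKNdef]]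
          exact hy₂e
        set y₂' : ℤ → A := shiftMap (-KN) y₂ with hy₂'def
        have hy₂'X : y₂' ∈ XT T := shiftMap_memXT hy₂X (-KN)
        have hy₂'eval : ∀ t : ℤ, y₂' t = y₂ (t - KN) := by
          intro t
          show y₂ (t + -KN) = _
          norm_num [sub_eq_add_neg]
        -- splice everything together
        have hj1 : x₃ ((n.1 : ℤ)) = y₁ ((n.1 : ℤ)) := by rw [hx₃n, hy₁n]
        set s1 : ℤ → A := splice x₃ y₁ ((n.1 : ℤ)) with hs1def
        have hs1X : s1 ∈ XT T := splice_memXT hx₃X hy₁X hj1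
        have hj2 : s1 ((n.1 : ℤ) + KN) = y₂' ((n.1 : ℤ) + KN) := by
          have e1 : s1 ((n.1 : ℤ) + KN) = y₁ ((n.1 : ℤ) + KN) := splice_right hj1 (by omega)
          have e2 : y₂' ((n.1 : ℤ) + KN) = y₂ ((n.1 : ℤ)) := by
            rw [hy₂'eval]
            congr 1
            ring
          rw [e1, e2, hy₁e', hy₂n]
        set s2 : ℤ → A := splice s1 y₂' ((n.1 : ℤ) + KN) with hs2def
        have hs2X : s2 ∈ XT T := splice_memXT hs1X hy₂'X hj2
        have hj3 : s2 ((n.1 : ℤ) + KN + KN) = x₃ ((n.1 : ℤ) + KN + KN) := by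
          have e1 : s2 ((n.1 : ℤ) + KN + KN) = y₂' ((n.1 : ℤ) + KN + KN) :=
            splice_right hj2 (by omega)
          have e2 : y₂' ((n.1 : ℤ) + KN + KN) = y₂ ((n.1 : ℤ) + KN) := by
            rw [hy₂'eval]
            congr 1
            ring
          have e3 : x₃ ((n.1 : ℤ) + KN + KN) = c₂ := by
            rw [show (n.1 : ℤ) + KN + KN = KN + KN + (n.1 : ℤ) from by ring]
            exact hx₃2k
          rw [e1, e2, hy₂e', e3]
        set F : ℤ → A := splice s2 x₃ ((n.1 : ℤ) + KN + KN) with hFdef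
        have hFX : F ∈ XT T := splice_memXT hs2X hx₃X hj3
        have hF0 : F 0 = xh 0 := by
          have e1 : F 0 = s2 0 := splice_left (by omega)
          have e2 : s2 0 = s1 0 := splice_left (by omega)
          have e3 : s1 0 = x₃ 0 := splice_left (by omega)
          rw [e1, e2, e3, h3l 0 (by omega), h2l 0 (by omega), h1l 0 (by omega)]
        have hFL : F ((L : ℤ)) = xh ((L : ℤ)) := by
          have e1 : F ((L : ℤ)) = x₃ ((L : ℤ)) := splice_right hj3 (by omega)
          rw [e1, h3r _ (by omega), h2r _ (by omega), h1r _ (by omega)]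
        have hFj : F (KN + (n.1 : ℤ)) = a₁ := by
          have e0 : KN + (n.1 : ℤ) = (n.1 : ℤ) + KN := by ring
          rw [e0]
          have e1 : F ((n.1 : ℤ) + KN) = s2 ((n.1 : ℤ) + KN) := splice_left (by omega)
          have e2 : s2 ((n.1 : ℤ) + KN) = s1 ((n.1 : ℤ) + KN) := splice_left le_rfl
          have e3 : s1 ((n.1 : ℤ) + KN) = y₁ ((n.1 : ℤ) + KN) := splice_right hj1 (by omega)
          rw [e1, e2, e3, hy₁e']
        have hFlab : ∀ t : ℤ, 0 ≤ t → t ≤ (L : ℤ) → Φ (F t) = Φ (z t) := by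
          intro t h0 hL
          by_cases hA : t ≤ (n.1 : ℤ)
          · have e1 : F t = s2 t := splice_left (by omega)
            have e2 : s2 t = s1 t := splice_left (by omega)
            have e3 : s1 t = x₃ t := splice_left hA
            rw [e1, e2, e3]
            exact hx₃lab t h0 hL
          · by_cases hB : t ≤ (n.1 : ℤ) + KN
            · have e1 : F t = s2 t := splice_left (by omega)
              have e2 : s2 t = s1 t := splice_left hB
              have e3 : s1 t = y₁ t := splice_right hj1 (by omega)
              rw [e1, e2, e3]
              have h5 := hy₁lab t (by omega)
                (by rw [show (n.1 : ℤ) + (k : ℤ) * N = (n.1 : ℤ) + KN from by rw [hKNdef]]; omega)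
              exact h5
            · by_cases hC : t ≤ (n.1 : ℤ) + KN + KN
              · have e1 : F t = s2 t := splice_left (by omega)
                have e2 : s2 t = y₂' t := splice_right hj2 (by omega)
                rw [e1, e2, hy₂'eval]
                have h5 := hy₂lab (t - KN) (by omega)
                  (by rw [show (n.1 : ℤ) + (k : ℤ) * N = (n.1 : ℤ) + KN from by rw [hKNdef]]; omega)
                rw [h5]
                have e4 : t - KN + (k : ℤ) * N = t := by rw [← hKNdef]; ring
                calc Φ (z (t - KN)) = Φ (z (t - KN + (k : ℤ) * N)) := by rw [hzper]
                _ = Φ (z t) := by rw [e4]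
              · have e1 : F t = x₃ t := splice_right hj3 (by omega)
                rw [e1]
                exact hx₃lab t h0 hL
        -- the routed block
        refine ⟨a₁, ⟨h₁, by simpa using hab⟩,
          (fun j : Fin (L + 1) => F ((j.1 : ℕ) : ℤ)), ⟨⟨F, hFX, 0, fun j => by
            rw [zero_add]⟩, fun j => ?_⟩, ?_, ?_, ?_⟩
        · show Φ (F ((j.1 : ℕ) : ℤ)) = Φ (z ((j.1 : ℕ) : ℤ))
          have hjL : ((j.1 : ℕ) : ℤ) ≤ (L : ℤ) := by
            have := j.2
            have h5 : ((j.1 : ℕ) : ℤ) < (L : ℤ) + 1 := by exact_mod_cast this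
            omega
          exact hFlab _ (by positivity) hjL
        · show F (((0 : Fin (L + 1)).1 : ℕ) : ℤ) = U 0
          have e : (((0 : Fin (L + 1)).1 : ℕ) : ℤ) = 0 := by simp
          rw [e, hF0]
          have := hxhU 0
          simpa using this
        · show F (((Fin.last L).1 : ℕ) : ℤ) = U (Fin.last L)
          have e : (((Fin.last L).1 : ℕ) : ℤ) = (L : ℤ) := by simp
          rw [e, hFL]
          have := hxhU (Fin.last L)
          simpa using this
        · show F ((jstar.1 : ℕ) : ℤ) = a₁
          rw [hjstarI]
          exact hFj
      · -- the easy case: the middle reroute already avoids a₂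
        refine ⟨c, ⟨hcM, by simpa using hca⟩,
          (fun j : Fin (L + 1) => x₁ ((j.1 : ℕ) : ℤ)), ⟨⟨x₁, hx₁X, 0, fun j => by
            rw [zero_add]⟩, fun j => ?_⟩, ?_, ?_, ?_⟩
        · show Φ (x₁ ((j.1 : ℕ) : ℤ)) = Φ (z ((j.1 : ℕ) : ℤ))
          have hjL : ((j.1 : ℕ) : ℤ) ≤ (L : ℤ) := by
            have := j.2
            have h5 : ((j.1 : ℕ) : ℤ) < (L : ℤ) + 1 := by exact_mod_cast this
            omega
          exact hx₁lab _ (by positivity) hjL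
        · show x₁ (((0 : Fin (L + 1)).1 : ℕ) : ℤ) = U 0
          have e : (((0 : Fin (L + 1)).1 : ℕ) : ℤ) = 0 := by simp
          rw [e, h1l 0 (by omega)]
          have := hxhU 0
          simpa using this
        · show x₁ (((Fin.last L).1 : ℕ) : ℤ) = U (Fin.last L)
          have e : (((Fin.last L).1 : ℕ) : ℤ) = (L : ℤ) := by simp
          rw [e, h1r _ (by omega)]
          have := hxhU (Fin.last L)
          simpa using this
        · show x₁ ((jstar.1 : ℕ) : ℤ) = c
          rw [hjstarI]
          exact hc1
  exact ⟨L, (fun j : Fin (L + 1) => Φ (z ((j.1 : ℕ) : ℤ))), jstar, htb⟩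

/-- Key uniqueness lemma: in a minimal transition block, no block can be routed
through two distinct symbols of `M`. -/
lemma routable_key [Fintype A] [TopologicalSpace A] [DiscreteTopology A]
    [Fintype B] [TopologicalSpace B] [DiscreteTopology B]
    (X : Set (ℤ → A)) (Y : Set (ℤ → B)) (π : (ℤ → A) → ℤ → B) (Φ : A → B)
    (hT : FactorTriple X Y π) (hXirr : IrreducibleSubshift X) (hX1 : IsOneStep X)
    (hΦ : OneBlockRule π Φ)
    (p : ℕ) (w : Fin (p + 1) → B) (n : Fin (p + 1)) (M : Set A)
    (hmin : IsMinTransBlock X Y Φ w n M)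
    (u : Fin (p + 1) → A) (hu : u ∈ blockPre X Φ w)
    (a₁ a₂ : A) (h₁ : a₁ ∈ M) (h₂ : a₂ ∈ M)
    (r₁ : Routable X Φ w u n a₁) (r₂ : Routable X Φ w u n a₂) : a₁ = a₂ := by
  by_contra hab
  obtain ⟨hXsub, T, hXT⟩ := hX1
  subst hXT
  obtain ⟨⟨hwY, hn0, hnp, hΦM, htrans⟩, hcardM⟩ := hmin
  obtain ⟨L', W', j', htb⟩ :=
    construct_tb Y π Φ T hT hXirr hΦ p w n M hn0 hnp hΦM htrans u hu a₁ a₂ h₁ h₂ r₁ r₂ hab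
  have hle : minDepth (XT T) Y Φ ≤ Nat.card ↥(M \ {a₂}) :=
    Nat.sInf_le ⟨L', W', j', M \ {a₂}, htb, rfl⟩
  have hle2 : Nat.card ↥M ≤ Nat.card ↥(M \ {a₂}) := by
    rw [hcardM]
    exact hle
  have hfin : M.Finite := Set.toFinite M
  have hd : (M \ {a₂}).ncard + 1 = M.ncard := Set.ncard_diff_singleton_add_one h₂ hfin
  have e1 : Nat.card ↥(M \ {a₂}) = (M \ {a₂}).ncard := Nat.card_coe_set_eq _
  have e2 : Nat.card ↥M = M.ncard := Nat.card_coe_set_eq _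
  have h5 : M.ncard ≤ (M \ {a₂}).ncard := by
    rw [← e2, ← e1]
    exact hle2
  rw [← hd] at h5
  exact Nat.not_succ_le_self _ h5

end Key

theorem routable_through_unique_symbol [Fintype A] [TopologicalSpace A] [DiscreteTopology A]
    [Fintype B] [TopologicalSpace B] [DiscreteTopology B]
    (X : Set (ℤ → A)) (Y : Set (ℤ → B)) (π : (ℤ → A) → ℤ → B) (Φ : A → B)
    (hT : FactorTriple X Y π) (hXirr : IrreducibleSubshift X) (hX1 : IsOneStep X)
    (hΦ : OneBlockRule π Φ)
    (p : ℕ) (w : Fin (p + 1) → B) (n : Fin (p + 1)) (M : Set A)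
    (hmin : IsMinTransBlock X Y Φ w n M) :
    ∀ u ∈ blockPre X Φ w, ∃! a, a ∈ M ∧ Routable X Φ w u n a := by
  intro u hu
  obtain ⟨a, haM, hra⟩ := hmin.1.2.2.2.2 u hu
  exact ⟨a, ⟨haM, hra⟩, fun b hb =>
    routable_key X Y π Φ hT hXirr hX1 hΦ p w n M hmin u hu b a hb.1 haM hb.2 hra⟩
end
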